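/- Let 𝔯 be the result of an arbitrarily chosen chase tree of a knowledge base K = ⟨R,D⟩, and let γ = ∃y⃗.β be a boolean conjunctive query. Then the following are equivalent: (i) K entails γ (γ holds in every first-order model of K); (ii) F ⊨ γ for every fact set F ∈ 𝔯; (iii) for every F ∈ 𝔯 there is a ground substitution σ with βσ ⊆ F. -/

import Mathlib

set_option maxHeartbeats 1000000

namespace DisjChase

open scoped Classical
noncomputable section

/-! ### Basic syntax -/

abbrev Var := ℕ
abbrev Pred := ℕ

/-- An atom over a type of terms `T`. -/
structure Atom (T : Type) where
  pred : Pred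
  args : List T
deriving DecidableEq

def Atom.map {S T : Type} (f : S → T) (a : Atom S) : Atom T :=
  ⟨a.pred, a.args.map f⟩

/-- A (disjunctive existential) rule: a nonempty body and a nonempty list of
nonempty head conjunctions, all constant- and function-free (atoms over variables). -/
structure Rule where
  body : List (Atom Var)
  heads : List (List (Atom Var))
  body_ne : body ≠ []
  heads_ne : heads ≠ []
  heads_conj_ne : ∀ h ∈ heads, h ≠ []

def Rule.branching (ρ : Rule) : ℕ := ρ.heads.length

def Rule.bodyVars (ρ : Rule) : List Var := (ρ.body.map Atom.args).flatten

/-- The frontier of a rule: the body variables that also occur in some head disjunct. -/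
def Rule.frontierList (ρ : Rule) : List Var :=
  (ρ.bodyVars.filter fun x => ρ.heads.any fun h => h.any fun a => a.args.contains x).dedup

/-- A rule is datalog if it is deterministic and has no existentially quantified variables. -/
def Rule.Datalog (ρ : Rule) : Prop :=
  ρ.branching = 1 ∧ ∀ h ∈ ρ.heads, ∀ a ∈ h, ∀ x ∈ a.args, x ∈ ρ.bodyVars

/-- A rule is deterministic if it has exactly one head disjunct. -/
def Rule.Deterministic (ρ : Rule) : Prop := ρ.branching = 1

/-- Constants: the special constant `⋆`, ordinary constants, the fresh constants
`c_f` (one for each skolem function symbol `f = f^ρ_{i,y}`), and the fresh constants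
`c_x` (one for each variable `x`, used by `σ_uc`). -/
inductive Const where
  | star : Const
  | nat : ℕ → Const
  | skolemConst : Rule → ℕ → Var → Const
  | varConst : Var → Const

/-- Ground terms: built from constants and the skolem function symbols `f^ρ_{i,y}`. -/
inductive GTerm where
  | const : Const → GTerm
  | func : Rule → ℕ → Var → List GTerm → GTerm

def GTerm.isFunctional : GTerm → Prop
  | .const _ => False
  | .func _ _ _ _ => True

/-- `GTerm.Subterm s t` : `s` is a subterm of `t`. -/
inductive GTerm.Subterm : GTerm → GTerm → Prop
  | refl (t : GTerm) : GTerm.Subterm t t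
  | func {u s : GTerm} {args : List GTerm} (ρ : Rule) (i : ℕ) (y : Var) :
      s ∈ args → GTerm.Subterm u s → GTerm.Subterm u (GTerm.func ρ i y args)

def GTerm.depth : GTerm → ℕ
  | .const _ => 1
  | .func _ _ _ args => 1 + (args.attach.map fun t => GTerm.depth t.1).foldr max 0
termination_by t => sizeOf t
decreasing_by
  have := List.sizeOf_lt_of_mem t.2
  simp only [GTerm.func.sizeOf_spec]
  omega

/-- A term is cyclic if it has a subterm of the form `f(s⃗)` with `f` occurring in `s⃗`. -/
def GTerm.Cyclic (t : GTerm) : Prop :=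
  ∃ (ρ : Rule) (i : ℕ) (y : Var) (args : List GTerm),
    GTerm.Subterm (GTerm.func ρ i y args) t ∧
    ∃ s ∈ args, ∃ args' : List GTerm, GTerm.Subterm (GTerm.func ρ i y args') s

/-- A `ρ`-cyclic term: a term `f(s⃗)` with `f` a function symbol of `sk(ρ)`
occurring also in `s⃗`. -/
def RuleCyclic (ρ : Rule) (t : GTerm) : Prop :=
  ∃ (i : ℕ) (y : Var) (args : List GTerm), t = GTerm.func ρ i y args ∧
    ∃ s ∈ args, ∃ args' : List GTerm, GTerm.Subterm (GTerm.func ρ i y args') s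

/-! ### Substitutions, facts, triggers -/

abbrev Subst := Var → GTerm
abbrev Fact := Atom GTerm
abbrev FactSet := Set Fact

/-- The substitution mapping every variable `x` to the fresh constant `c_x`. -/
def sigmaUC : Subst := fun x => GTerm.const (Const.varConst x)

structure Trigger where
  rule : Rule
  subst : Subst

/-- The skolemizing substitution for disjunct `i`: body variables are mapped by `σ`,
existential variables `y` to the skolem term `f^ρ_{i,y}` applied to the frontier images. -/
def skolemSubst (ρ : Rule) (i : ℕ) (σ : Subst) : Subst := fun y =>
  if y ∈ ρ.bodyVars then σ y
  else GTerm.func ρ i y (ρ.frontierList.map σ)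

/-- `out_i(λ) = η_i(sk(ρ))σ` (0-indexed disjuncts). -/
def Trigger.out (lam : Trigger) (i : ℕ) : FactSet :=
  { f | ∃ a ∈ lam.rule.heads.getD i [], f = a.map (skolemSubst lam.rule i lam.subst) }

def Trigger.outUnion (lam : Trigger) : FactSet :=
  { f | ∃ i < lam.rule.branching, f ∈ lam.out i }

def Trigger.Loaded (lam : Trigger) (F : FactSet) : Prop :=
  ∀ a ∈ lam.rule.body, a.map lam.subst ∈ F

def Trigger.Obsolete (lam : Trigger) (F : FactSet) : Prop :=
  ∃ h ∈ lam.rule.heads, ∃ σ' : Subst,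
    (∀ x ∈ lam.rule.bodyVars, σ' x = lam.subst x) ∧ ∀ a ∈ h, a.map σ' ∈ F

/-- A fact set satisfies a rule if all triggers with this rule are not loaded or obsolete. -/
def SatisfiesRule (F : FactSet) (ρ : Rule) : Prop :=
  ∀ σ : Subst, Trigger.Loaded ⟨ρ, σ⟩ F → Trigger.Obsolete ⟨ρ, σ⟩ F

/-- A ground term is over a rule set if all its function symbols come from
the skolemization of the rule set. -/
inductive GTerm.Over (R : Set Rule) : GTerm → Prop
  | const (c : Const) : GTerm.Over R (GTerm.const c)
  | func {ρ : Rule} {i : ℕ} {y : Var} {args : List GTerm} :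
      ρ ∈ R → (∀ t ∈ args, GTerm.Over R t) → GTerm.Over R (GTerm.func ρ i y args)

def RTrigger (R : Set Rule) (lam : Trigger) : Prop :=
  lam.rule ∈ R ∧ ∀ x : Var, (lam.subst x).Over R

/-- A function-free fact set (i.e., a database). -/
def FunctionFree (F : FactSet) : Prop :=
  ∀ a ∈ F, ∀ t ∈ a.args, ∃ c : Const, t = GTerm.const c

/-! ### Chase trees -/

/-- Iterated edge relation: paths of length `k`. -/
def EPow {V : Type} (E : V → V → Prop) : ℕ → V → V → Prop
  | 0 => Eq
  | n + 1 => fun a c => ∃ b, E a b ∧ EPow E n b c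

/-- A chase tree for the knowledge base `⟨R, D⟩` (restricted chase with datalog priority). -/
structure ChaseTree (R : Set Rule) (D : FactSet) where
  V : Type
  E : V → V → Prop
  fl : V → FactSet
  tl : V → Trigger
  root : V
  reach_root : ∀ v, Relation.ReflTransGen E root v
  no_in_root : ∀ v, ¬ E v root
  parent_unique : ∀ {u w v : V}, E u v → E w v → u = w
  root_label : fl root = D
  expand : ∀ v : V, (∃ c, E v c) →
    ∃ lam : Trigger, RTrigger R lam ∧ lam.Loaded (fl v) ∧ ¬ lam.Obsolete (fl v) ∧
      (¬ lam.rule.Datalog → ∀ ρ ∈ R, ρ.Datalog → SatisfiesRule (fl v) ρ) ∧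
      ∃ f : Fin lam.rule.branching → V,
        Function.Injective f ∧ (∀ i, E v (f i)) ∧ (∀ c, E v c → ∃ i, c = f i) ∧
        ∀ i : Fin lam.rule.branching, fl (f i) = fl v ∪ lam.out i.1 ∧ tl (f i) = lam
  leaf_sat : ∀ v : V, (∀ c, ¬ E v c) → ∀ ρ ∈ R, SatisfiesRule (fl v) ρ
  fairness : ∀ lam : Trigger, RTrigger R lam → ∀ v : V, lam.Loaded (fl v) →
    ∃ k : ℕ, ∀ u : V, EPow E k v u → lam.Obsolete (fl u)

/-- A branch of a chase tree: a maximal path starting at the root. -/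
structure Branch {R : Set Rule} {D : FactSet} (T : ChaseTree R D) where
  seq : ℕ → Option T.V
  head : seq 0 = some T.root
  step_some : ∀ n v w, seq n = some v → seq (n + 1) = some w → T.E v w
  step_max : ∀ n v, seq n = some v → (∃ c, T.E v c) → ∃ w, seq (n + 1) = some w
  step_leaf : ∀ n v, seq n = some v → (∀ c, ¬ T.E v c) → seq (n + 1) = none
  step_none : ∀ n, seq n = none → seq (n + 1) = none

/-- The result of a chase tree: the unions of the fact labels along its branches. -/
def ChaseTree.result {R : Set Rule} {D : FactSet} (T : ChaseTree R D) : Set FactSet :=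
  { S | ∃ b : Branch T, S = { f | ∃ n v, b.seq n = some v ∧ f ∈ T.fl v } }

/-- A rule set never-terminates if some knowledge base with this rule set
admits no finite chase tree. -/
def NeverTerminates (R : Set Rule) : Prop :=
  ∃ D : FactSet, FunctionFree D ∧ ¬ ∃ T : ChaseTree R D, Finite T.V

/-! ### Head-choices and cyclicity sequences -/

/-- A head-choice maps every rule of `R` to one of its (1-indexed) disjuncts. -/
def IsHeadChoice (R : Set Rule) (hc : Rule → ℕ) : Prop :=
  ∀ ρ ∈ R, 1 ≤ hc ρ ∧ hc ρ ≤ ρ.branching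

def outHC (hc : Rule → ℕ) (lam : Trigger) : FactSet := lam.out (hc lam.rule - 1)

/-- `b` is the branch `branch(T,hc)` of `T`: every successive label is the parent's
label united with `out_hc` of the applied trigger. -/
def IsHcBranch {R : Set Rule} {D : FactSet} (T : ChaseTree R D) (hc : Rule → ℕ)
    (b : Branch T) : Prop :=
  ∀ n v w, b.seq n = some v → b.seq (n + 1) = some w →
    T.fl w = T.fl v ∪ outHC hc (T.tl w)

/-- `λ` is g-unblockable for `⟨R,D⟩` and `hc`. -/
def GUnblockable (R : Set Rule) (D : FactSet) (hc : Rule → ℕ) (lam : Trigger) : Prop :=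
  ∀ T : ChaseTree R D, ∀ b : Branch T, IsHcBranch T hc b →
    ∀ n v, b.seq n = some v → lam.Loaded (T.fl v) →
      ∃ m u, b.seq m = some u ∧ outHC hc lam ⊆ T.fl u

/-- `F_i(K, hc, Λ)` for a sequence `Λ` of triggers (0-indexed: `Λ k` is applied to `F_k`). -/
def chaseSeq (D : FactSet) (hc : Rule → ℕ) (Λ : ℕ → Trigger) : ℕ → FactSet
  | 0 => D
  | n + 1 => chaseSeq D hc Λ n ∪ outHC hc (Λ n)

def SeqLoaded (D : FactSet) (hc : Rule → ℕ) (Λ : ℕ → Trigger) : Prop :=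
  ∀ n, (Λ n).Loaded (chaseSeq D hc Λ n)

/-- `t` occurs in the fact set `F`. -/
def GTerm.OccursIn (t : GTerm) (F : FactSet) : Prop :=
  ∃ a ∈ F, ∃ s ∈ a.args, t.Subterm s

def SeqGrowing (D : FactSet) (hc : Rule → ℕ) (Λ : ℕ → Trigger) : Prop :=
  ∀ i, ∃ j, i < j ∧ ∃ t : GTerm,
    t.OccursIn (chaseSeq D hc Λ j) ∧ ¬ t.OccursIn (chaseSeq D hc Λ i)

/-- A cyclicity sequence: an (infinite) sequence of `R`-triggers that is loaded,
growing, and g-unblockable. -/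
def CyclicitySequence (R : Set Rule) (D : FactSet) (hc : Rule → ℕ) (Λ : ℕ → Trigger) : Prop :=
  (∀ n, RTrigger R (Λ n)) ∧ SeqLoaded D hc Λ ∧ SeqGrowing D hc Λ ∧
    ∀ n, GUnblockable R D hc (Λ n)

/-! ### Over-approximations and unblockability -/

/-- `F` is an over-approximation of `R` and `hc` before `λ`. -/
def IsOverApprox (R : Set Rule) (hc : Rule → ℕ) (lam : Trigger) (F : FactSet) : Prop :=
  ∃ h : GTerm → GTerm,
    (∀ x ∈ lam.rule.frontierList, h (lam.subst x) = lam.subst x) ∧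
    ∀ D : FactSet, FunctionFree D → ∀ T : ChaseTree R D, ∀ b : Branch T,
      IsHcBranch T hc b → ∀ n u, b.seq n = some u → ¬ outHC hc lam ⊆ T.fl u →
        (Atom.map h) '' (T.fl u) ⊆ F

/-- The substitution mapping the frontier of `ρ` (in order) to the given argument list. -/
def frontierSubst (ρ : Rule) (args : List GTerm) : Subst := fun x =>
  args.getD (ρ.frontierList.idxOf x) (GTerm.const Const.star)

/-- Birth facts of a term. -/
def GTerm.births : GTerm → FactSet
  | .const _ => ∅
  | .func ρ i _ args =>
      Trigger.out ⟨ρ, frontierSubst ρ args⟩ i ∪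
        (args.attach.map fun s => GTerm.births s.1).foldr (· ∪ ·) ∅
termination_by t => sizeOf t
decreasing_by
  have := List.sizeOf_lt_of_mem s.2
  simp only [GTerm.func.sizeOf_spec]
  omega

/-- Birth facts of a trigger. -/
def Trigger.births (lam : Trigger) : FactSet :=
  { f | ∃ x ∈ lam.rule.frontierList, f ∈ GTerm.births (lam.subst x) }

/-- The term-skeleton of a trigger: the terms occurring in its birth facts together
with the constants in frontier positions. -/
def skel (lam : Trigger) : Set GTerm :=
  { t | ∃ a ∈ lam.births, ∃ s ∈ a.args, t.Subterm s } ∪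
  { t | ∃ x ∈ lam.rule.frontierList, lam.subst x = t ∧ ∃ c, t = GTerm.const c }

/-- `h^⋆_λ`. -/
def hstar (lam : Trigger) : GTerm → GTerm := fun t =>
  if t ∈ skel lam then t else GTerm.const Const.star

/-- `h^uc_λ`. -/
def huc (lam : Trigger) : GTerm → GTerm := fun t =>
  if t ∈ skel lam then t
  else
    match t with
    | GTerm.func ρ i y _ => GTerm.const (Const.skolemConst ρ i y)
    | GTerm.const (Const.skolemConst ρ i y) => GTerm.const (Const.skolemConst ρ i y)
    | _ => GTerm.const Const.star

def hImg (h : GTerm → GTerm) (F : FactSet) : FactSet := (Atom.map h) '' F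

def predsOf (R : Set Rule) : Set Pred :=
  { p | ∃ ρ ∈ R, (∃ a ∈ ρ.body, a.pred = p) ∨ ∃ h ∈ ρ.heads, ∃ a ∈ h, a.pred = p }

def skelConsts (lam : Trigger) : Set Const :=
  { c | ∃ t ∈ skel lam, GTerm.Subterm (GTerm.const c) t }

/-- All facts over a predicate of `R` and constants from `skel(λ) ∪ {⋆}`. -/
def baseFacts (R : Set Rule) (lam : Trigger) : FactSet :=
  { a | a.pred ∈ predsOf R ∧
    ∀ t ∈ a.args, ∃ c : Const, t = GTerm.const c ∧ (c ∈ skelConsts lam ∨ c = Const.star) }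

def Oclosed (R : Set Rule) (hc : Rule → ℕ) (lam : Trigger) (h : GTerm → GTerm)
    (F : FactSet) : Prop :=
  baseFacts R lam ⊆ F ∧ lam.births ⊆ F ∧
  ∀ lam' : Trigger, RTrigger R lam' → lam'.Loaded F → outHC hc lam' ≠ outHC hc lam →
    hImg h (outHC hc lam') ⊆ F

/-- `O(R, hc, λ, h)`. -/
def Oset (R : Set Rule) (hc : Rule → ℕ) (lam : Trigger) (h : GTerm → GTerm) : FactSet :=
  ⋂₀ { F | Oclosed R hc lam h F }

def OclosedND (R : Set Rule) (lam : Trigger) (h : GTerm → GTerm) (F : FactSet) : Prop :=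
  baseFacts R lam ⊆ F ∧ lam.births ⊆ F ∧
  ∀ lam' : Trigger, RTrigger R lam' → lam'.Loaded F →
    (lam'.rule = lam.rule → ∃ i < lam.rule.branching, lam'.out i ≠ lam.out i) →
    hImg h lam'.outUnion ⊆ F

/-- `O(R, λ, h)`. -/
def OsetND (R : Set Rule) (lam : Trigger) (h : GTerm → GTerm) : FactSet :=
  ⋂₀ { F | OclosedND R lam h F }

/-- `λ` is `⋆`-unblockable for `R`. -/
def StarUnblockable (R : Set Rule) (lam : Trigger) : Prop :=
  lam.rule.Datalog ∨ ¬ lam.Obsolete (OsetND R lam (hstar lam))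

/-- `λ` is `uc`-unblockable for `R` and `hc`. -/
def UcUnblockable (R : Set Rule) (hc : Rule → ℕ) (lam : Trigger) : Prop :=
  lam.rule.Datalog ∨ ¬ lam.Obsolete (Oset R hc lam (huc lam))

/-! ### Constant mappings and reversibility -/

abbrev CMap := Const → Option GTerm

/-- Apply a constant mapping to a ground term, replacing constants in its domain. -/
def applyCM (g : CMap) : GTerm → GTerm
  | .const c => (g c).getD (GTerm.const c)
  | .func ρ i y args => GTerm.func ρ i y (args.attach.map fun s => applyCM g s.1)
termination_by t => sizeOf t
decreasing_by
  have := List.sizeOf_lt_of_mem s.2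
  simp only [GTerm.func.sizeOf_spec]
  omega

/-- `g` is reversible for the (subterm-closed) set of terms `𝒯`. -/
def Reversible (g : CMap) (𝒯 : Set GTerm) : Prop :=
  (∀ c : Const, GTerm.const c ∈ 𝒯 → (g c).isSome) ∧
  (∀ t ∈ 𝒯, ∀ s ∈ 𝒯, t ≠ s → applyCM g t ≠ applyCM g s) ∧
  (∀ c : Const, GTerm.const c ∈ 𝒯 →
    ∀ s : GTerm, s.Subterm (applyCM g (GTerm.const c)) →
      ∀ u ∈ 𝒯, u.isFunctional → applyCM g u ≠ s)

def cmImg (g : CMap) (F : FactSet) : FactSet := (Atom.map (applyCM g)) '' F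

/-! ### Cyclicity prefixes -/

/-- The rule-database `D_ρ = body(ρ)σ_uc`. -/
def ruleDB (ρ : Rule) : FactSet := { f | ∃ a ∈ ρ.body, f = a.map sigmaUC }

/-- A cyclicity prefix for `R`, `hc`, and `ρ ∈ R`. -/
structure CyclicityPrefix (R : Set Rule) (hc : Rule → ℕ) (ρ : Rule) where
  n : ℕ
  npos : 0 < n
  trig : ℕ → Trigger
  g : CMap
  rtrig : ∀ i ≤ n, RTrigger R (trig i)
  first_rule : (trig 0).rule = ρ
  first_subst : (trig 0).subst = sigmaUC
  loaded : ∀ i ≤ n, (trig i).Loaded (chaseSeq (ruleDB ρ) hc trig i)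
  uc_unbl : ∀ i, 1 ≤ i → i ≤ n → UcUnblockable R hc (trig i)
  g_unbl : GUnblockable R (ruleDB ρ) hc (trig 0)
  last_rule : (trig n).rule = ρ
  last_cyclic : ∃ t : GTerm, RuleCyclic ρ t ∧ t.OccursIn (outHC hc (trig n))
  g_comp : applyCM g ∘ (trig 0).subst = (trig n).subst
  g_rev : ∀ i, 1 ≤ i → i ≤ n → ∀ j : ℕ,
    Reversible g (skel ⟨(trig i).rule, (applyCM g)^[j] ∘ (trig i).subst⟩)

/-- The infinite sequence `Λ^∞` obtained by unfolding a cyclicity prefix. -/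
def prefixInf {R : Set Rule} {hc : Rule → ℕ} {ρ : Rule} (P : CyclicityPrefix R hc ρ) :
    ℕ → Trigger := fun k =>
  if k = 0 then P.trig 0
  else ⟨(P.trig ((k - 1) % P.n + 1)).rule,
        (applyCM P.g)^[(k - 1) / P.n] ∘ (P.trig ((k - 1) % P.n + 1)).subst⟩

/-! ### RPC, RPC_s, DRPC -/

def RPCclosed (R : Set Rule) (hc : Rule → ℕ) (ρ : Rule) (F : FactSet) : Prop :=
  ruleDB ρ ⊆ F ∧ outHC hc ⟨ρ, sigmaUC⟩ ⊆ F ∧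
  ∀ lam : Trigger, RTrigger R lam →
    (∀ x ∈ lam.rule.bodyVars, ¬ (lam.subst x).Cyclic) →
    lam.Loaded F → UcUnblockable R hc lam →
    (lam.rule = ρ → Set.InjOn lam.subst { x | x ∈ lam.rule.bodyVars }) →
    outHC hc lam ⊆ F

/-- `RPC(R, hc, ρ)`. -/
def RPCset (R : Set Rule) (hc : Rule → ℕ) (ρ : Rule) : FactSet :=
  ⋂₀ { F | RPCclosed R hc ρ F }

/-- `R` is restricted prefix-cyclic. -/
def IsRPC (R : Set Rule) : Prop :=
  ∃ hc : Rule → ℕ, IsHeadChoice R hc ∧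
    ∃ ρ ∈ R, ∃ t : GTerm, RuleCyclic ρ t ∧ t.OccursIn (RPCset R hc ρ)

/-- The head-choice `hc_i`. -/
def hcIdx (i : ℕ) : Rule → ℕ := fun ρ => if i ≤ ρ.branching then i else ρ.branching

/-- `branching(R)`: the least bound on the branching of the rules of `R`. -/
def branchingR (R : Set Rule) : ℕ := sInf { b | ∀ ρ ∈ R, ρ.branching ≤ b }

/-- `R` is `RPC_s`. -/
def IsRPCs (R : Set Rule) : Prop :=
  ∃ i : ℕ, 1 ≤ i ∧ i ≤ branchingR R ∧
    ∃ ρ ∈ R, ∃ t : GTerm, RuleCyclic ρ t ∧ t.OccursIn (RPCset R (hcIdx i) ρ)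

def DRPCclosed (R : Set Rule) (ρ : Rule) (F : FactSet) : Prop :=
  ruleDB ρ ⊆ F ∧ Trigger.out ⟨ρ, sigmaUC⟩ 0 ⊆ F ∧
  ∀ lam : Trigger, RTrigger R lam → lam.rule.Deterministic →
    (∀ x ∈ lam.rule.bodyVars, ¬ (lam.subst x).Cyclic) →
    lam.Loaded F → StarUnblockable R lam →
    (lam.rule = ρ → Set.InjOn lam.subst { x | x ∈ lam.rule.bodyVars }) →
    lam.out 0 ⊆ F

/-- `DRPC(R, ρ)`. -/
def DRPCset (R : Set Rule) (ρ : Rule) : FactSet :=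
  ⋂₀ { F | DRPCclosed R ρ F }

/-- `R` is deterministic restricted prefix-cyclic. -/
def IsDRPC (R : Set Rule) : Prop :=
  ∃ ρ ∈ R, ρ.Deterministic ∧ ∃ t : GTerm, RuleCyclic ρ t ∧ t.OccursIn (DRPCset R ρ)


/-! ### First-order semantics and queries (Statement 0) -/

/-- A first-order interpretation. -/
structure Interp where
  M : Type
  predI : Pred → List M → Prop
  constI : Const → M

def Interp.SatRule (I : Interp) (ρ : Rule) : Prop :=
  ∀ v : Var → I.M,
    (∀ a ∈ ρ.body, I.predI a.pred (a.args.map v)) →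
    ∃ h ∈ ρ.heads, ∃ v' : Var → I.M,
      (∀ x ∈ ρ.bodyVars, v' x = v x) ∧ ∀ a ∈ h, I.predI a.pred (a.args.map v')

/-- Satisfaction of a (function-free) ground fact. -/
def Interp.SatFact (I : Interp) (a : Fact) : Prop :=
  ∃ cs : List Const, a.args = cs.map GTerm.const ∧ I.predI a.pred (cs.map I.constI)

/-- `I` is a first-order model of the knowledge base `⟨R, D⟩`. -/
def IsModel (I : Interp) (R : Set Rule) (D : FactSet) : Prop :=
  (∀ ρ ∈ R, I.SatRule ρ) ∧ ∀ a ∈ D, I.SatFact a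

/-- Satisfaction of the boolean conjunctive query `∃ y⃗. β` (all variables existential). -/
def Interp.SatQuery (I : Interp) (β : List (Atom Var)) : Prop :=
  ∃ v : Var → I.M, ∀ a ∈ β, I.predI a.pred (a.args.map v)

/-- `K = ⟨R,D⟩` entails the query: it holds in every first-order model of `K`. -/
def Entails (R : Set Rule) (D : FactSet) (β : List (Atom Var)) : Prop :=
  ∀ I : Interp, IsModel I R D → I.SatQuery β

/-- The Herbrand interpretation induced by a fact set; `F ⊨ γ` means
`(herbrand F).SatQuery γ`. -/
def herbrand (F : FactSet) : Interp :=
  ⟨GTerm, fun p ts => (⟨p, ts⟩ : Fact) ∈ F, GTerm.const⟩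

/-! ### Auxiliary lemmas for Proposition 1 -/

section Aux

lemma map_eq_map_mem {α β : Type*} {f g : α → β} :
    ∀ {l : List α}, l.map f = l.map g → ∀ x ∈ l, f x = g x
  | [], _, x, hx => absurd hx (by simp)
  | a :: l, h, x, hx => by
      simp only [List.map_cons, List.cons.injEq] at h
      rcases List.mem_cons.1 hx with rfl | hx
      · exact h.1
      · exact map_eq_map_mem h.2 x hx

lemma atom_map_congr {f g : Var → GTerm} {a : Atom Var}
    (h : ∀ x ∈ a.args, f x = g x) : a.map f = a.map g := by
  simp only [Atom.map, Atom.mk.injEq, true_and]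
  exact List.map_congr_left h

lemma mem_bodyVars {ρ : Rule} {x : Var} :
    x ∈ ρ.bodyVars ↔ ∃ b ∈ ρ.body, x ∈ b.args := by
  unfold Rule.bodyVars
  rw [List.mem_flatten]
  constructor
  · rintro ⟨l, hl, hx⟩
    obtain ⟨b, hb, rfl⟩ := List.mem_map.1 hl
    exact ⟨b, hb, hx⟩
  · rintro ⟨b, hb, hx⟩
    exact ⟨b.args, List.mem_map.2 ⟨b, hb, rfl⟩, hx⟩

lemma frontier_subset_bodyVars {ρ : Rule} {x : Var} (h : x ∈ ρ.frontierList) :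
    x ∈ ρ.bodyVars := by
  unfold Rule.frontierList at h
  exact (List.mem_filter.1 (List.mem_dedup.1 h)).1

lemma mem_frontier {ρ : Rule} {i : ℕ} (hi : i < ρ.heads.length) {a : Atom Var}
    (ha : a ∈ ρ.heads.getD i []) {x : Var} (hx : x ∈ a.args) (hxb : x ∈ ρ.bodyVars) :
    x ∈ ρ.frontierList := by
  unfold Rule.frontierList
  rw [List.mem_dedup, List.mem_filter]
  refine ⟨hxb, ?_⟩
  rw [List.getD_eq_getElem _ _ hi] at ha
  refine List.any_eq_true.2 ⟨_, List.getElem_mem hi, List.any_eq_true.2 ⟨a, ha, ?_⟩⟩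
  exact List.contains_iff_mem.2 hx

lemma skolem_agree {ρ : Rule} {i : ℕ} {σ σ' : Subst}
    (hfr : ρ.frontierList.map σ = ρ.frontierList.map σ')
    (hi : i < ρ.heads.length) {a : Atom Var} (ha : a ∈ ρ.heads.getD i []) :
    a.map (skolemSubst ρ i σ) = a.map (skolemSubst ρ i σ') := by
  apply atom_map_congr
  intro x hx
  unfold skolemSubst
  by_cases hb : x ∈ ρ.bodyVars
  · simp only [hb, if_true]
    exact map_eq_map_mem hfr x (mem_frontier hi ha hx hb)
  · simp only [hb, if_false, hfr]

lemma out_eq {ρ : Rule} {i : ℕ} {σ σ' : Subst}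
    (hfr : ρ.frontierList.map σ = ρ.frontierList.map σ')
    (hi : i < ρ.heads.length) :
    Trigger.out ⟨ρ, σ⟩ i = Trigger.out ⟨ρ, σ'⟩ i := by
  unfold Trigger.out
  ext f
  simp only [Set.mem_setOf_eq]
  constructor
  · rintro ⟨a, ha, rfl⟩
    exact ⟨a, ha, skolem_agree hfr hi ha⟩
  · rintro ⟨a, ha, rfl⟩
    exact ⟨a, ha, (skolem_agree hfr hi ha).symm⟩

lemma subterm_const {t s : GTerm} (h : t.Subterm s) :
    ∀ c : Const, s = .const c → t = .const c := by
  induction h with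
  | refl => exact fun c hc => hc
  | func ρ i y hmem hsub ih => intro c hc; cases hc

lemma obsolete_mono {lam : Trigger} {F F' : FactSet} (h : lam.Obsolete F) (hs : F ⊆ F') :
    lam.Obsolete F' := by
  obtain ⟨hd, hhd, σ', hag, hfac⟩ := h
  exact ⟨hd, hhd, σ', hag, fun a ha => hs (hfac a ha)⟩

lemma loaded_mono {lam : Trigger} {F F' : FactSet} (h : lam.Loaded F) (hs : F ⊆ F') :
    lam.Loaded F' := fun a ha => hs (h a ha)

variable {R : Set Rule} {D : FactSet} (T : ChaseTree R D)

lemma edge_spec {u w : T.V} (h : T.E u w) :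
    ∃ lam : Trigger, RTrigger R lam ∧ lam.Loaded (T.fl u) ∧ ¬ lam.Obsolete (T.fl u) ∧
      ∃ i < lam.rule.branching, T.fl w = T.fl u ∪ lam.out i := by
  obtain ⟨lam, rt, ld, nobs, _, f, _, _, fsurj, fprop⟩ := T.expand u ⟨w, h⟩
  obtain ⟨i, rfl⟩ := fsurj w h
  exact ⟨lam, rt, ld, nobs, i.1, i.2, (fprop i).1⟩

/-- Key occurrence lemma: if a functional term occurs in a chase tree label, then the
full output of the corresponding trigger disjunct is contained in the label. -/
lemma occurs_out (hD : FunctionFree D) (v : T.V) :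
    ∀ (ρ : Rule) (i : ℕ) (y : Var) (args : List GTerm),
      GTerm.OccursIn (GTerm.func ρ i y args) (T.fl v) →
      ∀ σ : Subst, ρ.frontierList.map σ = args → Trigger.out ⟨ρ, σ⟩ i ⊆ T.fl v := by
  have hmain : ∀ v : T.V, Relation.ReflTransGen T.E T.root v →
      ∀ (ρ : Rule) (i : ℕ) (y : Var) (args : List GTerm),
      GTerm.OccursIn (GTerm.func ρ i y args) (T.fl v) →
      ∀ σ : Subst, ρ.frontierList.map σ = args → Trigger.out ⟨ρ, σ⟩ i ⊆ T.fl v := by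
    intro v hv
    induction hv with
    | refl =>
        intro ρ i y args hocc σ hσ
        exfalso
        obtain ⟨a, haF, s, hs, hsub⟩ := hocc
        rw [T.root_label] at haF
        obtain ⟨c, rfl⟩ := hD a haF s hs
        exact absurd (subterm_const hsub c rfl) (by simp)
    | @tail u w hu huw ih =>
        intro ρ i y args hocc σ hσ
        obtain ⟨lam, rt, ld, nobs, i₀, hi₀, hflw⟩ := edge_spec T huw
        have hsub_u : T.fl u ⊆ T.fl w := hflw ▸ Set.subset_union_left
        -- helper: occurrence via a body variable image
        have hbodyocc : ∀ x ∈ lam.rule.bodyVars,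
            GTerm.Subterm (GTerm.func ρ i y args) (lam.subst x) →
            Trigger.out ⟨ρ, σ⟩ i ⊆ T.fl w := by
          intro x hxb hsub
          obtain ⟨b, hb, hxa⟩ := mem_bodyVars.1 hxb
          have hocc' : GTerm.OccursIn (GTerm.func ρ i y args) (T.fl u) :=
            ⟨b.map lam.subst, ld b hb, lam.subst x, by
              simp only [Atom.map]; exact List.mem_map.2 ⟨x, hxa, rfl⟩, hsub⟩
          exact (ih ρ i y args hocc' σ hσ).trans hsub_u
        obtain ⟨a, haF, s, hs, hsub⟩ := hocc
        rw [hflw] at haF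
        rcases haF with haF | haF
        · exact (ih ρ i y args ⟨a, haF, s, hs, hsub⟩ σ hσ).trans hsub_u
        · obtain ⟨a₀, ha₀, rfl⟩ := haF
          simp only [Atom.map] at hs
          obtain ⟨x, hxa, rfl⟩ := List.mem_map.1 hs
          by_cases hb : x ∈ lam.rule.bodyVars
          · rw [show skolemSubst lam.rule i₀ lam.subst x = lam.subst x from if_pos hb] at hsub
            exact hbodyocc x hb hsub
          · rw [show skolemSubst lam.rule i₀ lam.subst x
                = GTerm.func lam.rule i₀ x (lam.rule.frontierList.map lam.subst)
                from if_neg hb] at hsub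
            cases hsub with
            | refl =>
                rw [hflw, out_eq hσ (by simpa [Rule.branching] using hi₀)]
                exact Set.subset_union_right
            | func ρ' i' y' hmem hsub' =>
                obtain ⟨x', hx', rfl⟩ := List.mem_map.1 hmem
                exact hbodyocc x' (frontier_subset_bodyVars hx') hsub'
  exact hmain v (T.reach_root v)

/-- All terms occurring as arguments of facts in chase labels are over `R`. -/
lemma args_over (hD : FunctionFree D) (v : T.V) :
    ∀ a ∈ T.fl v, ∀ t ∈ a.args, GTerm.Over R t := by
  have hmain : ∀ v : T.V, Relation.ReflTransGen T.E T.root v →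
      ∀ a ∈ T.fl v, ∀ t ∈ a.args, GTerm.Over R t := by
    intro v hv
    induction hv with
    | refl =>
        intro a ha t ht
        rw [T.root_label] at ha
        obtain ⟨c, rfl⟩ := hD a ha t ht
        exact GTerm.Over.const c
    | @tail u w hu huw ih =>
        intro a ha t ht
        obtain ⟨lam, rt, ld, nobs, i₀, hi₀, hflw⟩ := edge_spec T huw
        rw [hflw] at ha
        rcases ha with ha | ha
        · exact ih a ha t ht
        · obtain ⟨a₀, ha₀, rfl⟩ := ha
          simp only [Atom.map] at ht
          obtain ⟨x, hxa, rfl⟩ := List.mem_map.1 ht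
          unfold skolemSubst
          by_cases hb : x ∈ lam.rule.bodyVars
          · simp only [hb, if_true]; exact rt.2 x
          · simp only [hb, if_false]
            refine GTerm.Over.func rt.1 ?_
            intro s hs
            obtain ⟨x', _, rfl⟩ := List.mem_map.1 hs
            exact rt.2 x'
  exact hmain v (T.reach_root v)

variable {T}
variable {b : Branch T}

lemma seq_none_mono {n : ℕ} (h : b.seq n = none) : ∀ k, b.seq (n + k) = none := by
  intro k
  induction k with
  | zero => exact h
  | succ k ih => exact b.step_none _ ih

lemma seq_some_of_le {n m : ℕ} (hnm : n ≤ m) {w : T.V} (h : b.seq m = some w) :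
    ∃ v, b.seq n = some v := by
  rcases hv : b.seq n with _ | v
  · have := seq_none_mono hv (m - n)
    rw [Nat.add_sub_cancel' hnm] at this
    rw [this] at h; cases h
  · exact ⟨v, rfl⟩

lemma fl_mono_step {n : ℕ} {v w : T.V} (hv : b.seq n = some v) (hw : b.seq (n + 1) = some w) :
    T.fl v ⊆ T.fl w := by
  obtain ⟨lam, _, _, _, i, _, hflw⟩ := edge_spec T (b.step_some n v w hv hw)
  rw [hflw]; exact Set.subset_union_left

lemma fl_mono {n : ℕ} {v : T.V} (hv : b.seq n = some v) :
    ∀ k {w : T.V}, b.seq (n + k) = some w → T.fl v ⊆ T.fl w := by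
  intro k
  induction k with
  | zero =>
      intro w hw
      simp only [Nat.add_zero] at hw
      rw [hv] at hw; cases hw; exact subset_rfl
  | succ k ih =>
      intro w hw
      have hw' : b.seq ((n + k) + 1) = some w := hw
      obtain ⟨u, hu⟩ := seq_some_of_le (Nat.le_succ (n + k)) hw'
      exact (ih hu).trans (fl_mono_step hu hw')

lemma fl_mono' {n m : ℕ} (hnm : n ≤ m) {v w : T.V} (hv : b.seq n = some v)
    (hw : b.seq m = some w) : T.fl v ⊆ T.fl w := by
  have : m = n + (m - n) := (Nat.add_sub_cancel' hnm).symm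
  rw [this] at hw
  exact fl_mono hv _ hw

lemma stage_lemma {F : FactSet}
    (hF : F = { f | ∃ n v, b.seq n = some v ∧ f ∈ T.fl v }) (l : List Fact)
    (hl : ∀ f ∈ l, f ∈ F) : ∃ n v, b.seq n = some v ∧ ∀ f ∈ l, f ∈ T.fl v := by
  induction l with
  | nil => exact ⟨0, T.root, b.head, by simp⟩
  | cons f l ih =>
      obtain ⟨n, v, hv, hall⟩ := ih (fun g hg => hl g (List.mem_cons_of_mem f hg))
      have hf := hl f List.mem_cons_self
      rw [hF] at hf
      obtain ⟨m, w, hw, hfw⟩ := hf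
      rcases le_total n m with hnm | hmn
      · exact ⟨m, w, hw, fun g hg => by
          rcases List.mem_cons.1 hg with rfl | hg
          · exact hfw
          · exact fl_mono' hnm hv hw (hall g hg)⟩
      · exact ⟨n, v, hv, fun g hg => by
          rcases List.mem_cons.1 hg with rfl | hg
          · exact fl_mono' hmn hw hv hfw
          · exact hall g hg⟩

lemma epow_of_seq : ∀ (k n : ℕ) {v u : T.V}, b.seq n = some v → b.seq (n + k) = some u →
    EPow T.E k v u := by
  intro k
  induction k with
  | zero =>
      intro n v u hv hu
      simp only [Nat.add_zero] at hu
      rw [hv] at hu; cases hu; rfl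
  | succ k ih =>
      intro n v u hv hu
      have hu' : b.seq ((n + 1) + k) = some u := by
        rw [show (n+1)+k = n + (k+1) from by omega]; exact hu
      obtain ⟨w, hw⟩ := seq_some_of_le (Nat.le_add_right (n+1) k) hu'
      exact ⟨w, b.step_some n v w hv hw, ih (n + 1) hw hu'⟩

lemma leaf_of_none : ∀ (k n : ℕ) {v : T.V}, b.seq n = some v → b.seq (n + k) = none →
    ∃ m u, n ≤ m ∧ b.seq m = some u ∧ (∀ c, ¬ T.E u c) ∧ T.fl v ⊆ T.fl u := by
  intro k
  induction k with
  | zero =>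
      intro n v hv hn
      simp only [Nat.add_zero] at hn
      rw [hv] at hn; cases hn
  | succ k ih =>
      intro n v hv hn
      rcases hu : b.seq (n + k) with _ | u
      · exact ih n hv hu
      · refine ⟨n + k, u, Nat.le_add_right n k, hu, ?_, fl_mono hv k hu⟩
        intro c hc
        obtain ⟨w, hw⟩ := b.step_max (n + k) u hu ⟨c, hc⟩
        have hn' : b.seq ((n + k) + 1) = none := hn
        rw [hn'] at hw; cases hw

end Aux

section Aux2

/-- `h` is a homomorphism-style valuation satisfying all facts of `F` in `I`. -/
def Holds (I : Interp) (h : GTerm → I.M) (F : FactSet) : Prop :=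
  ∀ a ∈ F, I.predI a.pred (a.args.map h)

variable {R : Set Rule} {D : FactSet}

lemma step_exists (T : ChaseTree R D) (hD : FunctionFree D) (I : Interp)
    (hmod : ∀ ρ ∈ R, I.SatRule ρ) {v : T.V} {h : GTerm → I.M}
    (hh : Holds I h (T.fl v)) (hc : ∃ c, T.E v c) :
    ∃ (w : T.V) (h' : GTerm → I.M), T.E v w ∧ Holds I h' (T.fl w) := by
  obtain ⟨lam, rt, ld, nobs, _, f, finj, fE, fsurj, fprop⟩ := T.expand v hc
  have hbody : ∀ a ∈ lam.rule.body, I.predI a.pred (a.args.map (fun x => h (lam.subst x))) := by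
    intro a ha
    have := hh _ (ld a ha)
    simpa [Atom.map, List.map_map, Function.comp_def] using this
  obtain ⟨hd, hhd, v', hag, hsat⟩ := hmod lam.rule rt.1 _ hbody
  obtain ⟨i, hi, hget⟩ := List.mem_iff_getElem.1 hhd
  have hgetD : lam.rule.heads.getD i [] = hd := by
    rw [List.getD_eq_getElem _ _ hi, hget]
  set args0 := lam.rule.frontierList.map lam.subst with hargs0
  have fresh : ∀ y : Var, ¬ GTerm.OccursIn (GTerm.func lam.rule i y args0) (T.fl v) := by
    intro y hy
    apply nobs
    have hout : Trigger.out ⟨lam.rule, lam.subst⟩ i ⊆ T.fl v :=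
      occurs_out T hD v lam.rule i y args0 hy lam.subst rfl
    refine ⟨lam.rule.heads.getD i [], ?_, skolemSubst lam.rule i lam.subst, ?_, ?_⟩
    · rw [hgetD]; exact hhd
    · intro x hx
      exact if_pos hx
    · intro a ha
      exact hout ⟨a, ha, rfl⟩
  set h' : GTerm → I.M := fun t =>
    if hy : ∃ y : Var, t = GTerm.func lam.rule i y args0 then v' hy.choose else h t
    with hh'def
  have hH'neg : ∀ t : GTerm, (¬ ∃ y : Var, t = GTerm.func lam.rule i y args0) → h' t = h t := by
    intro t ht
    show (if hy : ∃ y : Var, t = GTerm.func lam.rule i y args0 then v' hy.choose else h t) = h t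
    exact dif_neg ht
  have hH'pos : ∀ y : Var, h' (GTerm.func lam.rule i y args0) = v' y := by
    intro y
    have hy : ∃ y' : Var, GTerm.func lam.rule i y args0 = GTerm.func lam.rule i y' args0 :=
      ⟨y, rfl⟩
    have hch : hy.choose = y := by
      have := hy.choose_spec
      injection this with h1 h2 h3 h4
      exact h3.symm
    show (if hy : ∃ y' : Var, GTerm.func lam.rule i y args0 = GTerm.func lam.rule i y' args0
      then v' hy.choose else h _) = v' y
    rw [dif_pos hy, hch]
  have hibr : i < lam.rule.branching := by simpa [Rule.branching] using hi
  refine ⟨f ⟨i, hibr⟩, h', fE _, ?_⟩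
  rw [(fprop ⟨i, hibr⟩).1]
  intro a ha
  rcases ha with ha | ha
  · have heq : a.args.map h' = a.args.map h := by
      apply List.map_congr_left
      intro t ht
      apply hH'neg
      rintro ⟨y, rfl⟩
      exact fresh y ⟨a, ha, _, ht, GTerm.Subterm.refl _⟩
    rw [heq]
    exact hh a ha
  · obtain ⟨a₀, ha₀, rfl⟩ := ha
    have hsat' := hsat a₀ (hgetD ▸ ha₀)
    simp only [Atom.map]
    rw [List.map_map]
    have heq : a₀.args.map (h' ∘ skolemSubst lam.rule i lam.subst) = a₀.args.map v' := by
      apply List.map_congr_left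
      intro x hx
      by_cases hb : x ∈ lam.rule.bodyVars
      · have hsk : skolemSubst lam.rule i lam.subst x = lam.subst x := if_pos hb
        have hocc : ¬ ∃ y : Var, lam.subst x = GTerm.func lam.rule i y args0 := by
          rintro ⟨y, hy⟩
          obtain ⟨batom, hbm, hxa⟩ := mem_bodyVars.1 hb
          refine fresh y ⟨batom.map lam.subst, ld batom hbm, lam.subst x, ?_, hy ▸ GTerm.Subterm.refl _⟩
          simp only [Atom.map]
          exact List.mem_map.2 ⟨x, hxa, rfl⟩
        show h' (skolemSubst lam.rule i lam.subst x) = v' x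
        rw [hsk, hH'neg _ hocc, hag x hb]
      · have hsk : skolemSubst lam.rule i lam.subst x = GTerm.func lam.rule i x args0 :=
          if_neg hb
        show h' (skolemSubst lam.rule i lam.subst x) = v' x
        rw [hsk, hH'pos]
    rw [heq]
    exact hsat'

/-- The model-guided walk down a chase tree. -/
noncomputable def chaseWalk (T : ChaseTree R D) (I : Interp) (h0 : GTerm → I.M) :
    ℕ → Option (T.V × (GTerm → I.M))
  | 0 => some (T.root, h0)
  | n + 1 =>
    match chaseWalk T I h0 n with
    | none => none
    | some p =>
      if hp : ∃ q : T.V × (GTerm → I.M), T.E p.1 q.1 ∧ Holds I q.2 (T.fl q.1)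
      then some hp.choose else none

lemma result_model (T : ChaseTree R D) (hD : FunctionFree D) {F : FactSet}
    (hF : F ∈ T.result) : IsModel (herbrand F) R D := by
  obtain ⟨b, rfl⟩ := hF
  constructor
  · intro ρ hρ v hbody
    classical
    set σ : Subst := fun x => if x ∈ ρ.bodyVars then v x else GTerm.const Const.star with hσdef
    have hσb : ∀ x ∈ ρ.bodyVars, σ x = v x := by
      intro x hx
      show (if x ∈ ρ.bodyVars then v x else GTerm.const Const.star) = v x
      exact if_pos hx
    have hmap : ∀ a ∈ ρ.body, Atom.map σ a = (⟨a.pred, a.args.map v⟩ : Fact) := by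
      intro a ha
      simp only [Atom.map, Atom.mk.injEq, true_and]
      exact List.map_congr_left (fun x hx => hσb x (mem_bodyVars.2 ⟨a, ha, hx⟩))
    have hloadF : ∀ a ∈ ρ.body,
        Atom.map σ a ∈ { f | ∃ n v, b.seq n = some v ∧ f ∈ T.fl v } := by
      intro a ha
      rw [hmap a ha]
      exact hbody a ha
    obtain ⟨n, u, hun, hall⟩ := stage_lemma (b := b) rfl (ρ.body.map (Atom.map σ))
      (by
        rintro f hf
        obtain ⟨a, ha, rfl⟩ := List.mem_map.1 hf
        exact hloadF a ha)
    have hload_u : Trigger.Loaded ⟨ρ, σ⟩ (T.fl u) :=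
      fun a ha => hall _ (List.mem_map.2 ⟨a, ha, rfl⟩)
    have rt : RTrigger R ⟨ρ, σ⟩ := by
      refine ⟨hρ, fun x => ?_⟩
      show GTerm.Over R (σ x)
      by_cases hx : x ∈ ρ.bodyVars
      · rw [hσb x hx]
        obtain ⟨batom, hbm, hxa⟩ := mem_bodyVars.1 hx
        obtain ⟨m, w, hw, hfw⟩ := hbody batom hbm
        exact args_over T hD w _ hfw (v x) (List.mem_map.2 ⟨x, hxa, rfl⟩)
      · show GTerm.Over R (if x ∈ ρ.bodyVars then v x else GTerm.const Const.star)
        exact cast (congrArg (GTerm.Over R)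
          (show GTerm.const Const.star = σ x from (if_neg hx).symm)) (GTerm.Over.const _)
    obtain ⟨k, hk⟩ := T.fairness ⟨ρ, σ⟩ rt u hload_u
    have hobsF : Trigger.Obsolete ⟨ρ, σ⟩ { f | ∃ n v, b.seq n = some v ∧ f ∈ T.fl v } := by
      rcases h' : b.seq (n + k) with _ | u'
      · obtain ⟨m, u₂, hnm, hu₂, hleaf, hmono⟩ := leaf_of_none k n hun h'
        have := T.leaf_sat u₂ hleaf ρ hρ σ (loaded_mono hload_u hmono)
        exact obsolete_mono this (fun f hf => ⟨m, u₂, hu₂, hf⟩)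
      · have hepow := epow_of_seq k n hun h'
        exact obsolete_mono (hk u' hepow) (fun f hf => ⟨n + k, u', h', hf⟩)
    obtain ⟨hd, hhd, σ', hag, hfac⟩ := hobsF
    exact ⟨hd, hhd, σ', fun x hx => (hag x hx).trans (hσb x hx), fun a ha => hfac a ha⟩
  · intro a ha
    have haF : a ∈ { f | ∃ n v, b.seq n = some v ∧ f ∈ T.fl v } :=
      ⟨0, T.root, b.head, by rw [T.root_label]; exact ha⟩
    refine ⟨a.args.map (fun t => match t with | .const c => c | _ => Const.star), ?_, ?_⟩
    · rw [List.map_map]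
      symm
      have h1 : a.args.map (GTerm.const ∘ fun t =>
          match t with | .const c => c | _ => Const.star) = a.args.map id :=
        List.map_congr_left (by
          rintro t ht
          obtain ⟨c, rfl⟩ := hD a ha t ht
          rfl)
      rw [h1, List.map_id]
    · have h1 : (a.args.map (fun t =>
          match t with | .const c => c | _ => Const.star)).map GTerm.const
          = a.args := by
        rw [List.map_map]
        have h2 : a.args.map (GTerm.const ∘ fun t =>
            match t with | .const c => c | _ => Const.star) = a.args.map id :=
          List.map_congr_left (by
            rintro t ht
            obtain ⟨c, rfl⟩ := hD a ha t ht
            rfl)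
        rw [h2, List.map_id]
      show (⟨a.pred, (a.args.map (fun t =>
          match t with | .const c => c | _ => Const.star)).map GTerm.const⟩ : Fact) ∈ _
      rw [h1]
      exact haF

end Aux2

section Aux3

variable {R : Set Rule} {D : FactSet}

lemma chase_complete (T : ChaseTree R D) (hD : FunctionFree D) (β : List (Atom Var))
    (hQ : ∀ F ∈ T.result, (herbrand F).SatQuery β)
    (I : Interp) (hI : IsModel I R D) : I.SatQuery β := by
  classical
  set h0 : GTerm → I.M := fun t => match t with
    | .const c => I.constI c
    | .func _ _ _ _ => I.constI Const.star with hh0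
  have inv : ∀ n p, chaseWalk T I h0 n = some p → Holds I p.2 (T.fl p.1) := by
    intro n
    induction n with
    | zero =>
        intro p hp
        rw [chaseWalk] at hp
        cases hp
        intro a ha
        rw [T.root_label] at ha
        obtain ⟨cs, hcs, hpred⟩ := hI.2 a ha
        rw [hcs, List.map_map]
        have hmm : cs.map (h0 ∘ GTerm.const) = cs.map I.constI :=
          List.map_congr_left (fun c _ => rfl)
        rw [hmm]
        exact hpred
    | succ n ih =>
        intro p hp
        rw [chaseWalk] at hp
        rcases hq : chaseWalk T I h0 n with _ | q
        · rw [hq] at hp; simp at hp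
        · rw [hq] at hp
          dsimp only at hp
          by_cases hex : ∃ r : T.V × (GTerm → I.M), T.E q.1 r.1 ∧ Holds I r.2 (T.fl r.1)
          · rw [dif_pos hex] at hp
            cases hp
            exact hex.choose_spec.2
          · rw [dif_neg hex] at hp
            simp at hp
  have next_some : ∀ n p, chaseWalk T I h0 n = some p → (∃ c, T.E p.1 c) →
      ∃ q, chaseWalk T I h0 (n + 1) = some q := by
    intro n p hp hc
    obtain ⟨w, h', hE, hHold⟩ := step_exists T hD I hI.1 (inv n p hp) hc
    have hex : ∃ r : T.V × (GTerm → I.M), T.E p.1 r.1 ∧ Holds I r.2 (T.fl r.1) :=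
      ⟨(w, h'), hE, hHold⟩
    exact ⟨hex.choose, by rw [chaseWalk, hp]; dsimp only; rw [dif_pos hex]⟩
  have next_E : ∀ n p q, chaseWalk T I h0 n = some p → chaseWalk T I h0 (n + 1) = some q →
      T.E p.1 q.1 := by
    intro n p q hp hq
    rw [chaseWalk, hp] at hq
    dsimp only at hq
    by_cases hex : ∃ r : T.V × (GTerm → I.M), T.E p.1 r.1 ∧ Holds I r.2 (T.fl r.1)
    · rw [dif_pos hex] at hq
      cases hq
      exact hex.choose_spec.1
    · rw [dif_neg hex] at hq
      simp at hq
  have next_leaf : ∀ n p, chaseWalk T I h0 n = some p → (∀ c, ¬ T.E p.1 c) →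
      chaseWalk T I h0 (n + 1) = none := by
    intro n p hp hl
    rw [chaseWalk, hp]
    dsimp only
    rw [dif_neg]
    rintro ⟨r, hr, -⟩
    exact hl r.1 hr
  have next_none : ∀ n, chaseWalk T I h0 n = none → chaseWalk T I h0 (n + 1) = none := by
    intro n hn
    rw [chaseWalk, hn]
  have h_head : (chaseWalk T I h0 0).map Prod.fst = some T.root := by
    rw [chaseWalk]; rfl
  have h_some : ∀ n v w, (chaseWalk T I h0 n).map Prod.fst = some v →
      (chaseWalk T I h0 (n + 1)).map Prod.fst = some w → T.E v w := by
    intro n v w hv hw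
    obtain ⟨p, hp, hp1⟩ := Option.map_eq_some_iff.1 hv
    obtain ⟨q, hq, hq1⟩ := Option.map_eq_some_iff.1 hw
    subst hp1; subst hq1
    exact next_E n p q hp hq
  have h_max : ∀ n v, (chaseWalk T I h0 n).map Prod.fst = some v → (∃ c, T.E v c) →
      ∃ w, (chaseWalk T I h0 (n + 1)).map Prod.fst = some w := by
    intro n v hv hc
    obtain ⟨p, hp, hp1⟩ := Option.map_eq_some_iff.1 hv
    subst hp1
    obtain ⟨q, hq⟩ := next_some n p hp hc
    exact ⟨q.1, by rw [hq]; rfl⟩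
  have h_leaf : ∀ n v, (chaseWalk T I h0 n).map Prod.fst = some v → (∀ c, ¬ T.E v c) →
      (chaseWalk T I h0 (n + 1)).map Prod.fst = none := by
    intro n v hv hl
    obtain ⟨p, hp, hp1⟩ := Option.map_eq_some_iff.1 hv
    subst hp1
    rw [next_leaf n p hp hl]
    rfl
  have h_none : ∀ n, (chaseWalk T I h0 n).map Prod.fst = none →
      (chaseWalk T I h0 (n + 1)).map Prod.fst = none := by
    intro n hn
    rw [next_none n (Option.map_eq_none_iff.1 hn)]
    rfl
  let b : Branch T := ⟨fun n => (chaseWalk T I h0 n).map Prod.fst,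
    h_head, h_some, h_max, h_leaf, h_none⟩
  have hFres : { f | ∃ n v, b.seq n = some v ∧ f ∈ T.fl v } ∈ T.result := ⟨b, rfl⟩
  obtain ⟨σ, hσ⟩ := hQ _ hFres
  obtain ⟨n, u, hun, hall⟩ := stage_lemma (b := b) rfl (β.map (Atom.map σ))
    (by
      rintro f hf
      obtain ⟨a, ha, rfl⟩ := List.mem_map.1 hf
      exact hσ a ha)
  have hun' : (chaseWalk T I h0 n).map Prod.fst = some u := hun
  obtain ⟨p, hp, hp1⟩ := Option.map_eq_some_iff.1 hun'
  refine ⟨fun x => p.2 (σ x), ?_⟩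
  intro a ha
  have hmem : Atom.map σ a ∈ T.fl p.1 := by
    rw [hp1]
    exact hall _ (List.mem_map.2 ⟨a, ha, rfl⟩)
  have := inv n p hp _ hmem
  simp only [Atom.map] at this
  have e : List.map p.2 (List.map (σ : Var → GTerm) a.args)
      = List.map (fun x => p.2 (σ x)) a.args := List.map_map
  exact cast (congrArg (I.predI a.pred) e) this

end Aux3

/-- Proposition 1: for the result of an arbitrarily chosen chase tree of `⟨R,D⟩`,
the knowledge base entails `γ = ∃y⃗.β` iff `F ⊨ γ` for every `F` in the result iff
for every `F` in the result there is a ground substitution `σ` with `βσ ⊆ F`. -/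
theorem chase_sound_complete (R : Set Rule) (D : FactSet) (hD : FunctionFree D)
    (T : ChaseTree R D) (β : List (Atom Var)) :
    (Entails R D β ↔ ∀ F ∈ T.result, (herbrand F).SatQuery β) ∧
    ((∀ F ∈ T.result, (herbrand F).SatQuery β) ↔
      ∀ F ∈ T.result, ∃ σ : Subst, ∀ a ∈ β, a.map σ ∈ F) := by
  constructor
  · constructor
    · intro hE F hF
      exact hE (herbrand F) (result_model T hD hF)
    · intro hQ I hI
      exact chase_complete T hD β hQ I hI
  · constructor
    · intro h F hF
      obtain ⟨v, hv⟩ := h F hF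
      exact ⟨v, fun a ha => hv a ha⟩
    · intro h F hF
      obtain ⟨v, hv⟩ := h F hF
      exact ⟨v, fun a ha => hv a ha⟩

end
end DisjChase
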